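/- arXiv:1101.0058 — 4 statements merged into one kernel-verified Lean document; each statement's English description precedes it below -/
import Mathlib

section
/- For every real number x, the quantities A₁ and A₂ defined by A₁ = (Z₁·g₁₃(x) + g₁₂(x))·Z₂¹²/(Z₁² + 1) and A₂ = (Z₂·g₁₃(x) + g₁₂(x))·Z₁¹²/(Z₁² + 1) are both strictly positive, where Z₁ = (x+√(x²+4))/2, Z₂ = (x−√(x²+4))/2, g₁₃(x) = x¹³ + 14x¹¹ + 74x⁹ + 188x⁷ + 245x⁵ + 158x³ + 40x, and g₁₂(x) = x¹² + 13x¹⁰ + 62x⁸ + 138x⁶ + 153x⁴ + 81x² + 16. -/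
theorem stmt_8 (x : ℝ) :
    let Z₁ : ℝ := (x + Real.sqrt (x ^ 2 + 4)) / 2
    let Z₂ : ℝ := (x - Real.sqrt (x ^ 2 + 4)) / 2
    let g₁₃ : ℝ := x ^ 13 + 14 * x ^ 11 + 74 * x ^ 9 + 188 * x ^ 7 + 245 * x ^ 5
      + 158 * x ^ 3 + 40 * x
    let g₁₂ : ℝ := x ^ 12 + 13 * x ^ 10 + 62 * x ^ 8 + 138 * x ^ 6 + 153 * x ^ 4
      + 81 * x ^ 2 + 16
    let A₁ : ℝ := (Z₁ * g₁₃ + g₁₂) * Z₂ ^ 12 / (Z₁ ^ 2 + 1)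
    let A₂ : ℝ := (Z₂ * g₁₃ + g₁₂) * Z₁ ^ 12 / (Z₁ ^ 2 + 1)
    0 < A₁ ∧ 0 < A₂ := by
  intro Z₁ Z₂ g₁₃ g₁₂ A₁ A₂
  have h4 : (0:ℝ) < x ^ 2 + 4 := by positivity
  set s := Real.sqrt (x ^ 2 + 4) with hsdef
  have hs2 : s ^ 2 = x ^ 2 + 4 := Real.sq_sqrt h4.le
  have hs0 : 0 < s := Real.sqrt_pos.mpr h4
  have hZ1 : 0 < Z₁ := by
    show 0 < (x + s) / 2
    nlinarith [sq_nonneg (s + x), sq_nonneg (s - x)]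
  have hZ2 : Z₂ < 0 := by
    show (x - s) / 2 < 0
    nlinarith [sq_nonneg (s + x), sq_nonneg (s - x)]
  have hadd : Z₁ + Z₂ = x := by
    show (x + s) / 2 + (x - s) / 2 = x; ring
  have hmul : Z₁ * Z₂ = -1 := by
    show (x + s) / 2 * ((x - s) / 2) = -1
    nlinarith [hs2]
  have hB1B2 : (Z₁ * g₁₃ + g₁₂) * (Z₂ * g₁₃ + g₁₂)
      = x ^ 20 + 20 * x ^ 18 + 172 * x ^ 16 + 844 * x ^ 14 + 2638 * x ^ 12
        + 5516 * x ^ 10 + 7836 * x ^ 8 + 7476 * x ^ 6 + 4585 * x ^ 4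
        + 1632 * x ^ 2 + 256 := by
    have : (Z₁ * g₁₃ + g₁₂) * (Z₂ * g₁₃ + g₁₂)
        = (Z₁ * Z₂) * g₁₃ ^ 2 + (Z₁ + Z₂) * g₁₃ * g₁₂ + g₁₂ ^ 2 := by ring
    rw [this, hadd, hmul]
    show -1 * (x ^ 13 + 14 * x ^ 11 + 74 * x ^ 9 + 188 * x ^ 7 + 245 * x ^ 5
      + 158 * x ^ 3 + 40 * x) ^ 2 + x * (x ^ 13 + 14 * x ^ 11 + 74 * x ^ 9
      + 188 * x ^ 7 + 245 * x ^ 5 + 158 * x ^ 3 + 40 * x) * (x ^ 12 + 13 * x ^ 10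
      + 62 * x ^ 8 + 138 * x ^ 6 + 153 * x ^ 4 + 81 * x ^ 2 + 16)
      + (x ^ 12 + 13 * x ^ 10 + 62 * x ^ 8 + 138 * x ^ 6 + 153 * x ^ 4
      + 81 * x ^ 2 + 16) ^ 2 = _
    ring
  have hprod : 0 < (Z₁ * g₁₃ + g₁₂) * (Z₂ * g₁₃ + g₁₂) := by
    rw [hB1B2]; positivity
  have hsum : 0 < (Z₁ * g₁₃ + g₁₂) + (Z₂ * g₁₃ + g₁₂) := by
    have : (Z₁ * g₁₃ + g₁₂) + (Z₂ * g₁₃ + g₁₂) = (Z₁ + Z₂) * g₁₃ + 2 * g₁₂ := by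
      ring
    rw [this, hadd]
    show 0 < x * (x ^ 13 + 14 * x ^ 11 + 74 * x ^ 9 + 188 * x ^ 7 + 245 * x ^ 5
      + 158 * x ^ 3 + 40 * x) + 2 * (x ^ 12 + 13 * x ^ 10 + 62 * x ^ 8
      + 138 * x ^ 6 + 153 * x ^ 4 + 81 * x ^ 2 + 16)
    nlinarith [sq_nonneg x, pow_pos (show (0:ℝ) < 1 by norm_num) 1, sq_nonneg (x^7),
      sq_nonneg (x^6), sq_nonneg (x^5), sq_nonneg (x^4), sq_nonneg (x^3),
      sq_nonneg (x^2)]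
  have hB1 : 0 < Z₁ * g₁₃ + g₁₂ := by nlinarith [hprod, hsum]
  have hB2 : 0 < Z₂ * g₁₃ + g₁₂ := by nlinarith [hprod, hsum]
  have hden : 0 < Z₁ ^ 2 + 1 := by positivity
  have hZ2ne : Z₂ ≠ 0 := ne_of_lt hZ2
  have hZ2pow : 0 < Z₂ ^ 12 := by positivity
  have hZ1pow : 0 < Z₁ ^ 12 := by positivity
  exact ⟨div_pos (mul_pos hB1 hZ2pow) hden, div_pos (mul_pos hB2 hZ1pow) hden⟩
end

section
/- If T is a tree (forest) on n vertices, then its characteristic polynomial equals φ(T, x) = Σ_{k=0}^{⌊n/2⌋} (−1)^k · m(T, k) · x^{n−2k}, where m(T, k) is the number of matchings of T with exactly k edges. -/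
open scoped Classical in
/-- The characteristic polynomial `det(x I - A(G))` of a finite simple graph. -/
noncomputable def SimpleGraph.charPoly {V : Type*} [Fintype V] [DecidableEq V]
    (G : SimpleGraph V) : Polynomial ℝ :=
  Matrix.charpoly (G.adjMatrix ℝ)

open scoped Classical in
/-- The number of `k`-matchings (sets of `k` pairwise vertex-disjoint edges) of `G`. -/
noncomputable def SimpleGraph.matchingCount {V : Type*} [Fintype V] [DecidableEq V]
    (G : SimpleGraph V) (k : ℕ) : ℕ :=
  ((G.edgeFinset.powersetCard k).filter fun s =>
    (s : Set (Sym2 V)).Pairwise fun e f => ∀ w : V, ¬(w ∈ e ∧ w ∈ f)).card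

section MatchAux

open Finset Equiv Equiv.Perm Polynomial

set_option linter.unusedSectionVars false

variable {V : Type*} [Fintype V] [DecidableEq V] (G : SimpleGraph V)

/-- Build a walk along a chain of adjacent vertices. -/
private lemma chainWalk (f : ℕ → V) :
    ∀ m, (∀ t, t < m → G.Adj (f t) (f (t + 1))) →
      ∃ p : G.Walk (f 0) (f m), p.support = (List.range (m + 1)).map f := by
  intro m
  induction m with
  | zero => intro _; exact ⟨SimpleGraph.Walk.nil, rfl⟩
  | succ m ih =>
    intro h
    obtain ⟨p, hp⟩ := ih (fun t ht => h t (Nat.lt_succ_of_lt ht))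
    refine ⟨p.concat (h m (Nat.lt_succ_self m)), ?_⟩
    rw [SimpleGraph.Walk.support_concat, hp]
    simp [List.range_succ]

/-- In an acyclic graph, a permutation moving every non-fixed point to a neighbor
is an involution. -/
private lemma no_long_orbit (hT : G.IsAcyclic) (σ : Equiv.Perm V)
    (hadj : ∀ i, σ i ≠ i → G.Adj i (σ i)) (i : V) (h2 : σ (σ i) ≠ i) : False := by
  classical
  have hσi : σ i ≠ i := fun h => h2 (by rw [h, h])
  have hex : ∃ m, 0 < m ∧ (σ ^ m) i = i :=
    ⟨orderOf σ, orderOf_pos σ, by rw [pow_orderOf_eq_one]; rfl⟩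
  obtain ⟨m, hm0, hmi, hmin⟩ : ∃ m, 0 < m ∧ (σ ^ m) i = i ∧
      ∀ t, t < m → ¬(0 < t ∧ (σ ^ t) i = i) :=
    ⟨Nat.find hex, (Nat.find_spec hex).1, (Nat.find_spec hex).2,
      fun t ht => Nat.find_min hex ht⟩
  have hm1 : m ≠ 1 := by
    intro h; apply hσi; rw [h, pow_one] at hmi; exact hmi
  have hm2 : m ≠ 2 := by
    intro h; apply h2; rw [h, pow_two, Equiv.Perm.mul_apply] at hmi; exact hmi
  have hm3 : 3 ≤ m := by omega
  have hinj : ∀ s t, s < t → t ≤ m → (σ ^ t) i = (σ ^ s) i → s = 0 ∧ t = m := by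
    intro s t hst htm heq
    have key : (σ ^ (t - s)) i = i := by
      have h1 : (σ ^ s) ((σ ^ (t - s)) i) = (σ ^ s) i := by
        rw [← Equiv.Perm.mul_apply, ← pow_add, show s + (t - s) = t by omega]
        exact heq
      exact (σ ^ s).injective h1
    have : ¬ (t - s < m) := fun hlt => hmin _ hlt ⟨by omega, key⟩
    omega
  have hstep : ∀ t : ℕ, σ ((σ ^ t) i) = (σ ^ (t + 1)) i := by
    intro t
    rw [pow_succ', Equiv.Perm.mul_apply]
  have hchain : ∀ t, t < m → G.Adj ((σ ^ t) i) ((σ ^ (t + 1)) i) := by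
    intro t ht
    have hne : σ ((σ ^ t) i) ≠ (σ ^ t) i := by
      intro h
      apply hσi
      refine (σ ^ t).injective ?_
      calc (σ ^ t) (σ i) = (σ ^ t * σ) i := rfl
        _ = (σ ^ (t + 1)) i := by rw [← pow_succ]
        _ = σ ((σ ^ t) i) := (hstep t).symm
        _ = (σ ^ t) i := h
    have := hadj _ hne
    rwa [hstep t] at this
  obtain ⟨p, hp⟩ := chainWalk G (fun t => (σ ^ (t + 1)) i) (m - 1)
    (fun t ht => hchain (t + 1) (by omega))
  have hend : (σ ^ (m - 1 + 1)) i = i := by rw [show m - 1 + 1 = m by omega]; exact hmi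
  have hstart : (σ ^ (0 + 1)) i = σ i := by rw [pow_one]
  have hnodup : p.support.Nodup := by
    rw [hp]
    rw [List.nodup_map_iff_inj_on List.nodup_range]
    intro a ha b hb heq
    simp only [List.mem_range] at ha hb
    by_contra hne
    rcases Nat.lt_or_ge a b with hab | hab
    · have := hinj (a + 1) (b + 1) (by omega) (by omega) heq.symm
      omega
    · have hba : b < a := by omega
      have := hinj (b + 1) (a + 1) (by omega) (by omega) heq
      omega
  let p' : G.Walk (σ i) i := (p.copy hstart hend)
  have hp'sup : p'.support = p.support := SimpleGraph.Walk.support_copy _ _ _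
  have huniq := hT.path_unique (SimpleGraph.Path.singleton (G.adj_symm (hadj i hσi)))
    ⟨p', by rw [SimpleGraph.Walk.isPath_def, hp'sup]; exact hnodup⟩
  have hlen : (SimpleGraph.Walk.cons (G.adj_symm (hadj i hσi)) SimpleGraph.Walk.nil).support.length
      = p'.support.length := by
    have := congrArg (fun q : G.Path (σ i) i => (q : G.Walk (σ i) i).support.length) huniq
    simpa [SimpleGraph.Path.singleton] using this
  have h1 : (SimpleGraph.Walk.cons (G.adj_symm (hadj i hσi))
      SimpleGraph.Walk.nil).support.length = 2 := by simp
  have h2' : p'.support.length = m := by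
    rw [hp'sup, hp]
    simp
    omega
  omega

private lemma invol_data (σ : Equiv.Perm V) (h : σ * σ = 1) :
    σ.support.card = 2 * Multiset.card σ.cycleType ∧
      Equiv.Perm.sign σ = (-1) ^ (Multiset.card σ.cycleType) := by
  have hord : orderOf σ ∣ 2 := orderOf_dvd_of_pow_eq_one (by rw [pow_two]; exact h)
  have h2 : ∀ n ∈ σ.cycleType, n = 2 := fun n hn =>
    le_antisymm (Nat.le_of_dvd two_pos ((Equiv.Perm.dvd_of_mem_cycleType hn).trans hord))
      (Equiv.Perm.two_le_of_mem_cycleType hn)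
  have hrep : σ.cycleType = Multiset.replicate (Multiset.card σ.cycleType) 2 :=
    Multiset.eq_replicate_card.mpr h2
  have hsum : σ.cycleType.sum = 2 * Multiset.card σ.cycleType := by
    rw [hrep, Multiset.sum_replicate, Multiset.card_replicate, smul_eq_mul, Nat.mul_comm]
  constructor
  · rw [← Equiv.Perm.sum_cycleType, hsum]
  · rw [Equiv.Perm.sign_of_cycleType, hsum, pow_add, pow_mul]
    norm_num

/-- The partner function of a matching. -/
private noncomputable def matchF (s : Finset (Sym2 V)) (v : V) : V :=
  if h : ∃ e ∈ s, v ∈ e then Sym2.Mem.other h.choose_spec.2 else v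

variable {G}
variable {s : Finset (Sym2 V)}

private lemma unique_edge
    (hpw : (s : Set (Sym2 V)).Pairwise fun e f => ∀ w : V, ¬(w ∈ e ∧ w ∈ f))
    {e f : Sym2 V} {v : V} (he : e ∈ s) (hf : f ∈ s) (hve : v ∈ e) (hvf : v ∈ f) : e = f := by
  by_contra hne
  exact hpw he hf hne v ⟨hve, hvf⟩

private lemma matchF_edge_mem {v : V} (h : ∃ e ∈ s, v ∈ e) : s(v, matchF s v) ∈ s := by
  rw [matchF, dif_pos h, Sym2.other_spec h.choose_spec.2]
  exact h.choose_spec.1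

private lemma matchF_edge_eq
    (hpw : (s : Set (Sym2 V)).Pairwise fun e f => ∀ w : V, ¬(w ∈ e ∧ w ∈ f))
    {v : V} {e : Sym2 V} (he : e ∈ s) (hv : v ∈ e) : e = s(v, matchF s v) :=
  unique_edge hpw he (matchF_edge_mem ⟨e, he, hv⟩) hv (Sym2.mem_mk_left _ _)

private lemma matchF_not {v : V} (h : ¬ ∃ e ∈ s, v ∈ e) : matchF s v = v := by
  rw [matchF, dif_neg h]

private lemma matchF_adj (hsub : ∀ e ∈ s, e ∈ G.edgeSet)
    {v : V} (h : ∃ e ∈ s, v ∈ e) : G.Adj v (matchF s v) :=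
  (SimpleGraph.mem_edgeSet G).mp (hsub _ (matchF_edge_mem h))

private lemma matchF_invol
    (hpw : (s : Set (Sym2 V)).Pairwise fun e f => ∀ w : V, ¬(w ∈ e ∧ w ∈ f)) :
    Function.Involutive (matchF s) := by
  intro v
  by_cases h : ∃ e ∈ s, v ∈ e
  · have hmem : s(v, matchF s v) ∈ s := matchF_edge_mem h
    have := matchF_edge_eq hpw hmem (Sym2.mem_mk_right _ _)
    rw [Sym2.eq_swap] at this
    exact (Sym2.congr_right.mp this).symm
  · have h1 : matchF s v = v := matchF_not h
    rw [h1, h1]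

/-- For an involution, the edge through any endpoint is the orbit edge. -/
private lemma orbit_edge (σ : Equiv.Perm V) (hσ : σ * σ = 1) {u v : V} (hu : u ∈ s(v, σ v)) :
    s(u, σ u) = s(v, σ v) := by
  have hσσ : ∀ w, σ (σ w) = w := fun w => by
    have := congrArg (fun τ : Equiv.Perm V => τ w) hσ
    simpa using this
  rcases Sym2.mem_iff.mp hu with rfl | rfl
  · rfl
  · rw [hσσ v, Sym2.eq_swap]

private lemma endpoints_card (e : Sym2 V) (he : ¬e.IsDiag) :
    (Finset.univ.filter (· ∈ e)).card = 2 := by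
  induction e using Sym2.ind with
  | _ a b =>
    have hab : a ≠ b := by simpa using he
    have hset : Finset.univ.filter (· ∈ s(a, b)) = {a, b} := by
      ext v; simp [Sym2.mem_iff]
    rw [hset, card_insert_of_notMem (by simpa using hab), card_singleton]

private lemma cover_card (s : Finset (Sym2 V)) (hnd : ∀ e ∈ s, ¬e.IsDiag)
    (hpw : (s : Set (Sym2 V)).Pairwise fun e f => ∀ w : V, ¬(w ∈ e ∧ w ∈ f)) :
    (s.biUnion fun e => Finset.univ.filter (· ∈ e)).card = 2 * s.card := by
  rw [Finset.card_biUnion]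
  · rw [Finset.sum_congr rfl (fun e he => endpoints_card e (hnd e he)), Finset.sum_const,
      smul_eq_mul, Nat.mul_comm]
  · intro e he f hf hef
    rw [Function.onFun, Finset.disjoint_left]
    intro w hw1 hw2
    simp only [Finset.mem_filter, Finset.mem_univ, true_and] at hw1 hw2
    exact hpw he hf hef w ⟨hw1, hw2⟩

end MatchAux

section Main

open Finset Equiv Equiv.Perm Polynomial

set_option maxHeartbeats 1000000 in
private theorem main' {V : Type*} [Fintype V] [DecidableEq V] (G : SimpleGraph V)
    [DecidableRel G.Adj] (hT : G.IsAcyclic) :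
    Matrix.charpoly (G.adjMatrix ℝ) = ∑ k ∈ Finset.range (Fintype.card V / 2 + 1),
      (-1 : Polynomial ℝ) ^ k * (G.matchingCount k : Polynomial ℝ)
        * Polynomial.X ^ (Fintype.card V - 2 * k) := by
  classical
  set n := Fintype.card V with hn
  set S : Finset (Equiv.Perm V) :=
    Finset.univ.filter (fun σ => σ * σ = 1 ∧ ∀ i, σ i ≠ i → G.Adj i (σ i)) with hS
  set Mch : Finset (Finset (Sym2 V)) := G.edgeFinset.powerset.filter
    (fun s => (s : Set (Sym2 V)).Pairwise fun e f => ∀ w : V, ¬(w ∈ e ∧ w ∈ f)) with hMch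
  have hMchP : ∀ s ∈ Mch, (∀ e ∈ s, e ∈ G.edgeSet)
      ∧ (s : Set (Sym2 V)).Pairwise (fun e f => ∀ w : V, ¬(w ∈ e ∧ w ∈ f)) := by
    intro s hs
    rw [hMch, mem_filter, mem_powerset] at hs
    exact ⟨fun e he => SimpleGraph.mem_edgeFinset.mp (hs.1 he), hs.2⟩
  -- the zero terms
  have hzero : ∀ σ ∈ (Finset.univ : Finset (Equiv.Perm V)), σ ∉ S →
      Equiv.Perm.sign σ • ∏ i, (Matrix.charmatrix (G.adjMatrix ℝ)) (σ i) i = 0 := by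
    intro σ _ hσ
    rw [hS, mem_filter] at hσ
    push_neg at hσ
    have hng := hσ (mem_univ σ)
    by_cases hall : ∀ i, σ i ≠ i → G.Adj i (σ i)
    · have hninv : ¬ σ * σ = 1 := fun h => by
        obtain ⟨i, hi, hna⟩ := hng h
        exact hna (hall i hi)
      have : ∃ i, σ (σ i) ≠ i := by
        by_contra hc
        push_neg at hc
        exact hninv (Equiv.ext fun v => by
          rw [Equiv.Perm.mul_apply]; simpa using hc v)
      obtain ⟨i, hi⟩ := this
      exact (no_long_orbit G hT σ hall i hi).elim
    · push_neg at hall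
      obtain ⟨i, hi, hnadj⟩ := hall
      have hz : Matrix.charmatrix (G.adjMatrix ℝ) (σ i) i = 0 := by
        rw [Matrix.charmatrix_apply_ne _ _ _ hi, SimpleGraph.adjMatrix_apply,
          if_neg (fun h => hnadj h.symm), map_zero, neg_zero]
      have hp : ∏ j : V, (Matrix.charmatrix (G.adjMatrix ℝ)) (σ j) j = 0 :=
        Finset.prod_eq_zero (Finset.mem_univ i) hz
      rw [hp, smul_zero]
  -- evaluation of terms on S
  have hterm : ∀ σ ∈ S,
      Equiv.Perm.sign σ • ∏ i, (Matrix.charmatrix (G.adjMatrix ℝ)) (σ i) i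
        = (-1 : Polynomial ℝ) ^ ((σ.support.image fun v => s(v, σ v)).card)
          * Polynomial.X ^ (n - 2 * (σ.support.image fun v => s(v, σ v)).card) := by
    intro σ hσ
    rw [hS, mem_filter] at hσ
    obtain ⟨-, hinv, hadj⟩ := hσ
    obtain ⟨hsupp, hsign⟩ := invol_data σ hinv
    set k := Multiset.card σ.cycleType with hk
    set I := σ.support.image fun v => s(v, σ v) with hI
    have him_pw : (I : Set (Sym2 V)).Pairwise (fun e f => ∀ w : V, ¬(w ∈ e ∧ w ∈ f)) := by
      intro e he f hf hef w hw
      simp only [hI, Finset.coe_image, Set.mem_image, Finset.mem_coe] at he hf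
      obtain ⟨v, hv, rfl⟩ := he
      obtain ⟨u, hu, rfl⟩ := hf
      exact hef ((orbit_edge σ hinv hw.1).symm.trans (orbit_edge σ hinv hw.2))
    have hnd : ∀ e ∈ I, ¬e.IsDiag := by
      intro e he
      rw [hI, Finset.mem_image] at he
      obtain ⟨v, hv, rfl⟩ := he
      rw [Sym2.mk_isDiag_iff]
      exact fun h => Equiv.Perm.mem_support.mp hv h.symm
    have hcover : σ.support = I.biUnion (fun e => Finset.univ.filter (· ∈ e)) := by
      ext v
      simp only [Finset.mem_biUnion, Finset.mem_filter, Finset.mem_univ, true_and, hI,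
        Finset.mem_image]
      constructor
      · intro hv
        exact ⟨s(v, σ v), ⟨v, hv, rfl⟩, Sym2.mem_mk_left _ _⟩
      · rintro ⟨e, ⟨u, hu, rfl⟩, hv⟩
        rcases Sym2.mem_iff.mp hv with rfl | rfl
        · exact hu
        · exact Equiv.Perm.apply_mem_support.mpr hu
    have him_card : I.card = k := by
      have h1 := cover_card I hnd him_pw
      rw [← hcover] at h1
      omega
    have hprod : ∏ i, (Matrix.charmatrix (G.adjMatrix ℝ)) (σ i) i
        = (-1 : Polynomial ℝ) ^ (σ.support.card) * Polynomial.X ^ (n - σ.support.card) := by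
      rw [← Finset.prod_mul_prod_compl σ.support]
      congr 1
      · calc ∏ v ∈ σ.support, (Matrix.charmatrix (G.adjMatrix ℝ)) (σ v) v
            = ∏ _v ∈ σ.support, (-1 : Polynomial ℝ) := by
              refine Finset.prod_congr rfl (fun v hv => ?_)
              have hne : σ v ≠ v := Equiv.Perm.mem_support.mp hv
              rw [Matrix.charmatrix_apply_ne _ _ _ hne, SimpleGraph.adjMatrix_apply,
                if_pos ((hadj v hne).symm), map_one]
          _ = (-1 : Polynomial ℝ) ^ (σ.support.card) := by rw [Finset.prod_const]
      · calc ∏ v ∈ σ.supportᶜ, (Matrix.charmatrix (G.adjMatrix ℝ)) (σ v) v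
            = ∏ _v ∈ σ.supportᶜ, (Polynomial.X : Polynomial ℝ) := by
              refine Finset.prod_congr rfl (fun v hv => ?_)
              have hfix : σ v = v := Equiv.Perm.notMem_support.mp (Finset.mem_compl.mp hv)
              rw [hfix, Matrix.charmatrix_apply_eq, SimpleGraph.adjMatrix_apply,
                if_neg (G.irrefl), map_zero, sub_zero]
          _ = Polynomial.X ^ (n - σ.support.card) := by
              rw [Finset.prod_const, Finset.card_compl, hn]
    rw [hprod, hsign, hsupp, him_card]
    have h2k : (-1 : Polynomial ℝ) ^ (2 * k) = 1 := by
      rw [pow_mul]; norm_num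
    rw [h2k, one_mul]
    rcases Nat.even_or_odd k with hk2 | hk2
    · simp [hk2.neg_one_pow]
    · simp [hk2.neg_one_pow, Units.smul_def]
  -- the bijection
  have hbij : ∑ σ ∈ S, Equiv.Perm.sign σ • ∏ i, (Matrix.charmatrix (G.adjMatrix ℝ)) (σ i) i
      = ∑ s ∈ Mch, (-1 : Polynomial ℝ) ^ s.card * Polynomial.X ^ (n - 2 * s.card) := by
    refine Finset.sum_bij' (fun σ _ => σ.support.image fun v => s(v, σ v))
      (fun s hs => Function.Involutive.toPerm _ (matchF_invol (hMchP s hs).2))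
      ?_ ?_ ?_ ?_ hterm
    -- maps into Mch
    · intro σ hσ
      rw [hS, mem_filter] at hσ
      obtain ⟨hinv, hadj⟩ := hσ.2
      rw [hMch, mem_filter, mem_powerset]
      constructor
      · intro e he
        rw [Finset.mem_image] at he
        obtain ⟨v, hv, rfl⟩ := he
        exact SimpleGraph.mem_edgeFinset.mpr
          ((SimpleGraph.mem_edgeSet G).mpr (hadj v (Equiv.Perm.mem_support.mp hv)))
      · intro e he f hf hef w hw
        simp only [Finset.coe_image, Set.mem_image, Finset.mem_coe] at he hf
        obtain ⟨v, hv, rfl⟩ := he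
        obtain ⟨u, hu, rfl⟩ := hf
        exact hef ((orbit_edge σ hinv hw.1).symm.trans (orbit_edge σ hinv hw.2))
    -- maps into S
    · intro s hs
      obtain ⟨hsub, hpw⟩ := hMchP s hs
      rw [hS, mem_filter]
      refine ⟨mem_univ _, Equiv.ext fun v => ?_, fun v hv => ?_⟩
      · simp only [Equiv.Perm.mul_apply, Equiv.Perm.one_apply,
          Function.Involutive.coe_toPerm]
        exact matchF_invol hpw v
      · rw [Function.Involutive.coe_toPerm] at hv ⊢
        by_cases hc : ∃ e ∈ s, v ∈ e
        · exact matchF_adj hsub hc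
        · exact absurd (matchF_not hc) hv
    -- left inverse
    · intro σ hσ
      rw [hS, mem_filter] at hσ
      obtain ⟨hinv, hadj⟩ := hσ.2
      have him_pw : ((σ.support.image fun v => s(v, σ v)) : Set (Sym2 V)).Pairwise
          (fun e f => ∀ w : V, ¬(w ∈ e ∧ w ∈ f)) := by
        intro e he f hf hef w hw
        simp only [Finset.coe_image, Set.mem_image, Finset.mem_coe] at he hf
        obtain ⟨v, hv, rfl⟩ := he
        obtain ⟨u, hu, rfl⟩ := hf
        exact hef ((orbit_edge σ hinv hw.1).symm.trans (orbit_edge σ hinv hw.2))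
      apply Equiv.ext
      intro v
      rw [Function.Involutive.coe_toPerm]
      by_cases hv : v ∈ σ.support
      · have hmem : s(v, σ v) ∈ σ.support.image fun v => s(v, σ v) :=
          Finset.mem_image_of_mem _ hv
        have := matchF_edge_eq him_pw hmem (Sym2.mem_mk_left _ _)
        exact (Sym2.congr_right.mp this).symm
      · have hnc : ¬ ∃ e ∈ σ.support.image fun v => s(v, σ v), v ∈ e := by
          rintro ⟨e, he, hv'⟩
          rw [Finset.mem_image] at he
          obtain ⟨u, hu, rfl⟩ := he
          rcases Sym2.mem_iff.mp hv' with rfl | rfl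
          · exact hv hu
          · exact hv (Equiv.Perm.apply_mem_support.mpr hu)
        rw [matchF_not hnc]
        exact (Equiv.Perm.notMem_support.mp hv).symm
    -- right inverse
    · intro s hs
      obtain ⟨hsub, hpw⟩ := hMchP s hs
      apply Finset.Subset.antisymm
      · intro e he
        rw [Finset.mem_image] at he
        obtain ⟨v, hv, rfl⟩ := he
        rw [Equiv.Perm.mem_support, Function.Involutive.coe_toPerm] at hv
        have hc : ∃ e ∈ s, v ∈ e := by
          by_contra hc
          exact hv (matchF_not hc)
        have := matchF_edge_mem hc
        rwa [Function.Involutive.coe_toPerm]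
      · intro e he
        have ha : e.out.1 ∈ e := Sym2.out_fst_mem e
        have hc : ∃ f ∈ s, e.out.1 ∈ f := ⟨e, he, ha⟩
        have hne : matchF s e.out.1 ≠ e.out.1 := (matchF_adj hsub hc).ne'
        rw [Finset.mem_image]
        refine ⟨e.out.1, ?_, ?_⟩
        · rw [Equiv.Perm.mem_support, Function.Involutive.coe_toPerm]
          exact hne
        · rw [Function.Involutive.coe_toPerm]
          exact (matchF_edge_eq hpw he ha).symm
  -- identification of matching counts
  have hMC : ∀ k : ℕ, G.matchingCount k = (Mch.filter fun s => s.card = k).card := by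
    intro k
    rw [SimpleGraph.matchingCount, bind_pure_comp, Finset.fmap_def, Finset.filter_image]
    erw [Finset.card_image_of_injective _ Finset.coe_injective]
    apply congrArg Finset.card
    ext s
    simp only [Finset.mem_filter, Finset.mem_powersetCard, hMch, Finset.mem_powerset,
      Finset.subset_iff, SimpleGraph.mem_edgeFinset, Function.comp]
    tauto
  -- size bound for matchings
  have hbound : ∀ s ∈ Mch, s.card ≤ n / 2 := by
    intro s hs
    obtain ⟨hsub, hpw⟩ := hMchP s hs
    have hnd : ∀ e ∈ s, ¬e.IsDiag := fun e he =>
      (SimpleGraph.not_isDiag_of_mem_edgeSet G (hsub e he))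
    have h1 := cover_card s hnd hpw
    have h2 : (s.biUnion fun e => Finset.univ.filter (· ∈ e)).card ≤ n :=
      Finset.card_le_univ _
    omega
  -- reorganize the RHS
  have hRHS : ∑ k ∈ Finset.range (n / 2 + 1),
      (-1 : Polynomial ℝ) ^ k * (G.matchingCount k : Polynomial ℝ)
        * Polynomial.X ^ (n - 2 * k)
      = ∑ s ∈ Mch, (-1 : Polynomial ℝ) ^ s.card * Polynomial.X ^ (n - 2 * s.card) := by
    have hmaps : ∀ s ∈ Mch, s.card ∈ Finset.range (n / 2 + 1) := fun s hs =>
      Finset.mem_range.mpr (Nat.lt_succ_of_le (hbound s hs))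
    rw [← Finset.sum_fiberwise_of_maps_to hmaps
      (fun s : Finset (Sym2 V) => (-1 : Polynomial ℝ) ^ s.card * Polynomial.X ^ (n - 2 * s.card))]
    refine Finset.sum_congr rfl (fun k hk => Eq.symm ?_)
    calc ∑ s ∈ Mch.filter (fun s => s.card = k),
          (-1 : Polynomial ℝ) ^ s.card * Polynomial.X ^ (n - 2 * s.card)
        = ∑ _s ∈ Mch.filter (fun s => s.card = k),
          (-1 : Polynomial ℝ) ^ k * Polynomial.X ^ (n - 2 * k) := by
          refine Finset.sum_congr rfl (fun s hs => ?_)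
          rw [(Finset.mem_filter.mp hs).2]
      _ = (Mch.filter (fun s => s.card = k)).card
            • ((-1 : Polynomial ℝ) ^ k * Polynomial.X ^ (n - 2 * k)) := Finset.sum_const _
      _ = (-1 : Polynomial ℝ) ^ k * (G.matchingCount k : Polynomial ℝ)
            * Polynomial.X ^ (n - 2 * k) := by
          rw [hMC k, nsmul_eq_mul]
          ring
  calc Matrix.charpoly (G.adjMatrix ℝ)
      = ∑ σ : Equiv.Perm V, Equiv.Perm.sign σ
          • ∏ i, (Matrix.charmatrix (G.adjMatrix ℝ)) (σ i) i := by
        rw [Matrix.charpoly, Matrix.det_apply]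
    _ = ∑ σ ∈ S, Equiv.Perm.sign σ
          • ∏ i, (Matrix.charmatrix (G.adjMatrix ℝ)) (σ i) i :=
        (Finset.sum_subset (Finset.subset_univ S) hzero).symm
    _ = ∑ s ∈ Mch, (-1 : Polynomial ℝ) ^ s.card * Polynomial.X ^ (n - 2 * s.card) := hbij
    _ = _ := hRHS.symm

end Main

theorem stmt_16 {V : Type*} [Fintype V] [DecidableEq V] (G : SimpleGraph V)
    (hT : G.IsAcyclic) :
    G.charPoly = ∑ k ∈ Finset.range (Fintype.card V / 2 + 1),
      (-1 : Polynomial ℝ) ^ k * (G.matchingCount k : Polynomial ℝ)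
        * Polynomial.X ^ (Fintype.card V - 2 * k) := by
  classical
  unfold SimpleGraph.charPoly
  exact main' G hT
end

section
/- Define the sequence u_n(x) of characteristic polynomials of the graphs P_n^{6,6} recursively by u_n(x) = x·u_{n−1}(x) − u_{n−2}(x) for n ≥ 14 with u₁₂(x) = x¹² − 13x¹⁰ + 62x⁸ − 138x⁶ + 153x⁴ − 81x² + 16 and u₁₃(x) = x¹³ − 14x¹¹ + 74x⁹ − 188x⁷ + 245x⁵ − 158x³ + 40x. Then for every real x and every n ≥ 12 with n even, (−1)^{n/2}·u_n evaluated at the purely imaginary argument, i.e. i^{−n}·u_n(ix), is a real polynomial in x with all coefficients nonnegative, and is strictly positive for all real x. -/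
open Polynomial

noncomputable def q12' : Polynomial ℝ :=
  X ^ 12 + 13 * X ^ 10 + 62 * X ^ 8 + 138 * X ^ 6 + 153 * X ^ 4 + 81 * X ^ 2 + 16

noncomputable def q13' : Polynomial ℝ :=
  X ^ 13 + 14 * X ^ 11 + 74 * X ^ 9 + 188 * X ^ 7 + 245 * X ^ 5 + 158 * X ^ 3 + 40 * X

noncomputable def pq : ℕ → Polynomial ℝ × Polynomial ℝ
  | 0 => (q12', q13')
  | m + 1 => ((pq m).2, X * (pq m).2 + (pq m).1)

lemma coeff16 (k : ℕ) : (16 : Polynomial ℝ).coeff k = if k = 0 then 16 else 0 := by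
  rw [show (16 : Polynomial ℝ) = ((16:ℕ) : Polynomial ℝ) by push_cast; ring,
    Polynomial.coeff_natCast_ite]
  split_ifs <;> norm_num

lemma Ipow (k : ℕ) : Complex.I ^ (2 * k) = (-1 : ℂ) ^ k := by
  rw [pow_mul, Complex.I_sq]

lemma pq_coeff_nonneg (m : ℕ) : (∀ k, 0 ≤ (pq m).1.coeff k) ∧ (∀ k, 0 ≤ (pq m).2.coeff k) := by
  induction m with
  | zero =>
    constructor <;> intro k <;>
      simp only [pq, q12', q13', coeff_add, coeff_mul_X, coeff_X_pow, coeff16,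
        Polynomial.coeff_ofNat_mul, Polynomial.coeff_X] <;>
      split_ifs <;> norm_num
  | succ m ih =>
    refine ⟨ih.2, fun k => ?_⟩
    simp only [pq, coeff_add]
    have h1 : 0 ≤ (X * (pq m).2).coeff k := by
      cases k with
      | zero => simp
      | succ k => simpa [Polynomial.coeff_X_mul] using ih.2 k
    exact add_nonneg h1 (ih.1 k)

lemma pq_eval_nonneg (m : ℕ) (x : ℝ) (hx : 0 ≤ x) :
    0 ≤ (pq m).1.eval x ∧ 0 ≤ (pq m).2.eval x := by
  induction m with
  | zero =>
    constructor <;> simp [pq, q12', q13'] <;> positivity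
  | succ m ih =>
    refine ⟨ih.2, ?_⟩
    simp only [pq, eval_add, eval_mul, eval_X]
    have := mul_nonneg hx ih.2
    linarith [ih.1]

lemma pq_eval_ge (j : ℕ) (x : ℝ) (hx : 0 ≤ x) : 16 ≤ (pq (2 * j)).1.eval x := by
  induction j with
  | zero =>
    simp [pq, q12']
    positivity
  | succ j ih =>
    have h2 : 2 * (j + 1) = (2 * j) + 1 + 1 := by ring
    rw [h2]
    show (16 : ℝ) ≤ (X * (pq (2 * j)).2 + (pq (2 * j)).1).eval x
    simp only [eval_add, eval_mul, eval_X]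
    have := mul_nonneg hx (pq_eval_nonneg (2 * j) x hx).2
    linarith

lemma pq_parity (m : ℕ) (x : ℝ) :
    (pq m).1.eval (-x) = (-1) ^ m * (pq m).1.eval x ∧
    (pq m).2.eval (-x) = (-1) ^ (m + 1) * (pq m).2.eval x := by
  induction m with
  | zero =>
    constructor <;> simp [pq, q12', q13'] <;> ring
  | succ m ih =>
    refine ⟨ih.2, ?_⟩
    show (X * (pq m).2 + (pq m).1).eval (-x) = _ * (X * (pq m).2 + (pq m).1).eval x
    simp only [eval_add, eval_mul, eval_X, ih.1, ih.2]
    ring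

lemma pq_complex (u : ℕ → Polynomial ℝ)
    (h12 : u 12 = Polynomial.X ^ 12 - 13 * Polynomial.X ^ 10 + 62 * Polynomial.X ^ 8
      - 138 * Polynomial.X ^ 6 + 153 * Polynomial.X ^ 4 - 81 * Polynomial.X ^ 2 + 16)
    (h13 : u 13 = Polynomial.X ^ 13 - 14 * Polynomial.X ^ 11 + 74 * Polynomial.X ^ 9
      - 188 * Polynomial.X ^ 7 + 245 * Polynomial.X ^ 5 - 158 * Polynomial.X ^ 3
      + 40 * Polynomial.X)
    (hrec : ∀ n, 14 ≤ n → u n = Polynomial.X * u (n - 1) - u (n - 2))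
    (m : ℕ) (x : ℝ) :
    (((pq m).1.eval x : ℝ) : ℂ) =
      Complex.I ^ (-((12 + m : ℕ) : ℤ)) * Polynomial.aeval ((x : ℂ) * Complex.I) (u (12 + m)) ∧
    (((pq m).2.eval x : ℝ) : ℂ) =
      Complex.I ^ (-((13 + m : ℕ) : ℤ)) * Polynomial.aeval ((x : ℂ) * Complex.I) (u (13 + m)) := by
  have hI : (Complex.I : ℂ) ≠ 0 := Complex.I_ne_zero
  induction m with
  | zero =>
    constructor
    · have h1 : Complex.I ^ (-((12 + 0 : ℕ) : ℤ)) = 1 := by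
        rw [show (-((12 + 0 : ℕ) : ℤ)) = 2 * (-6) by norm_num, zpow_mul]
        norm_num [zpow_two, Complex.I_mul_I]
      rw [h1, one_mul, show 12 + 0 = 12 from rfl, h12]
      show ((q12'.eval x : ℝ) : ℂ) = _
      simp only [q12', map_add, map_sub, map_mul, map_pow, map_ofNat, aeval_X,
        eval_add, eval_sub, eval_mul, eval_pow, eval_X, eval_ofNat]
      push_cast
      ring_nf
      simp only [show (6:ℕ) = 2*3 from rfl, show (8:ℕ) = 2*4 from rfl,
        show (10:ℕ) = 2*5 from rfl, show (12:ℕ) = 2*6 from rfl,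
        show (14:ℕ) = 2*7 from rfl, Ipow]
      norm_num
    · have h1 : Complex.I ^ (-((13 + 0 : ℕ) : ℤ)) = -Complex.I := by
        rw [show (-((13 + 0 : ℕ) : ℤ)) = 2 * (-6) + (-1) by norm_num,
          zpow_add₀ hI, zpow_mul]
        norm_num [zpow_two, Complex.I_mul_I, Complex.inv_I]
      rw [h1, show 13 + 0 = 13 from rfl, h13]
      show ((q13'.eval x : ℝ) : ℂ) = _
      simp only [q13', map_add, map_sub, map_mul, map_pow, map_ofNat, aeval_X,
        eval_add, eval_sub, eval_mul, eval_pow, eval_X, eval_ofNat]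
      push_cast
      ring_nf
      simp only [show (6:ℕ) = 2*3 from rfl, show (8:ℕ) = 2*4 from rfl,
        show (10:ℕ) = 2*5 from rfl, show (12:ℕ) = 2*6 from rfl,
        show (14:ℕ) = 2*7 from rfl, Ipow]
      norm_num
  | succ m ih =>
    have key : u (14 + m) = Polynomial.X * u (13 + m) - u (12 + m) := by
      have h := hrec (14 + m) (by omega)
      rw [show 14 + m - 1 = 13 + m by omega, show 14 + m - 2 = 12 + m by omega] at h
      exact h
    have e1 : (12 + (m + 1)) = 13 + m := by omega
    have e2 : (13 + (m + 1)) = 14 + m := by omega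
    rw [e1, e2]
    refine ⟨ih.2, ?_⟩
    show (((X * (pq m).2 + (pq m).1).eval x : ℝ) : ℂ) = _
    simp only [eval_add, eval_mul, eval_X, key, map_sub, map_mul, aeval_X]
    push_cast
    have hz1 : Complex.I ^ (-((14 + m : ℕ) : ℤ)) * Complex.I
        = Complex.I ^ (-((13 + m : ℕ) : ℤ)) := by
      have h := zpow_add₀ hI (-((14 + m : ℕ) : ℤ)) 1
      rw [zpow_one] at h
      rw [← h]
      congr 1
      push_cast; ring
    have hz2 : -(Complex.I ^ (-((14 + m : ℕ) : ℤ))) = Complex.I ^ (-((12 + m : ℕ) : ℤ)) := by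
      have h : (-((12 + m : ℕ) : ℤ)) = (-((14 + m : ℕ) : ℤ)) + 2 := by push_cast; ring
      rw [h, zpow_add₀ hI]
      norm_num [zpow_two, Complex.I_mul_I]
    calc (x : ℂ) * ((pq m).2.eval x : ℝ) + ((pq m).1.eval x : ℝ)
        = (x : ℂ) * (Complex.I ^ (-((13 + m : ℕ) : ℤ))
            * Polynomial.aeval ((x : ℂ) * Complex.I) (u (13 + m)))
          + Complex.I ^ (-((12 + m : ℕ) : ℤ))
            * Polynomial.aeval ((x : ℂ) * Complex.I) (u (12 + m)) := by rw [ih.1, ih.2]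
      _ = Complex.I ^ (-((14 + m : ℕ) : ℤ)) *
          ((x : ℂ) * Complex.I * Polynomial.aeval ((x : ℂ) * Complex.I) (u (13 + m))
            - Polynomial.aeval ((x : ℂ) * Complex.I) (u (12 + m))) := by
          rw [← hz1, ← hz2]; ring

theorem stmt_18 (u : ℕ → Polynomial ℝ)
    (h12 : u 12 = Polynomial.X ^ 12 - 13 * Polynomial.X ^ 10 + 62 * Polynomial.X ^ 8
      - 138 * Polynomial.X ^ 6 + 153 * Polynomial.X ^ 4 - 81 * Polynomial.X ^ 2 + 16)
    (h13 : u 13 = Polynomial.X ^ 13 - 14 * Polynomial.X ^ 11 + 74 * Polynomial.X ^ 9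
      - 188 * Polynomial.X ^ 7 + 245 * Polynomial.X ^ 5 - 158 * Polynomial.X ^ 3
      + 40 * Polynomial.X)
    (hrec : ∀ n, 14 ≤ n → u n = Polynomial.X * u (n - 1) - u (n - 2))
    (n : ℕ) (hn : 12 ≤ n) (hne : Even n) :
    ∃ q : Polynomial ℝ,
      (∀ k, 0 ≤ q.coeff k) ∧
      (∀ x : ℝ, ((q.eval x : ℝ) : ℂ) =
        Complex.I ^ (-(n : ℤ)) * Polynomial.aeval ((x : ℂ) * Complex.I) (u n)) ∧
      (∀ x : ℝ, 0 < q.eval x) := by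
  set m := n - 12 with hm
  have hnm : 12 + m = n := by omega
  obtain ⟨r, hr⟩ := hne
  have hj : m = 2 * (r - 6) := by omega
  refine ⟨(pq m).1, (pq_coeff_nonneg m).1, ?_, ?_⟩
  · intro x
    have := (pq_complex u h12 h13 hrec m x).1
    rwa [hnm] at this
  · intro x
    rcases le_or_gt 0 x with hx | hx
    · have := pq_eval_ge (r - 6) x hx
      rw [← hj] at this
      linarith
    · have h1 := pq_eval_ge (r - 6) (-x) (by linarith)
      rw [← hj] at h1
      have hpow : (-1 : ℝ) ^ m = 1 := by rw [hj, pow_mul]; norm_num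
      have h2 := (pq_parity m (-x)).1
      rw [neg_neg, hpow, one_mul] at h2
      linarith
end

section
/- Let Z₁ = (x+√(x²+4))/2 and Z₂ = (x−√(x²+4))/2 for real x ≠ 0, and suppose real numbers A₁, A₂, C₁, C₂ and even integers n ≥ 2t ≥ 20 are given. Then the expression K = (Z₁⁴ − Z₂⁴)(A₂C₁ − A₁C₂) + (2Z₁^t + 2Z₂^t + 4)(A₁Z₁ⁿ(1 − Z₁⁴) + A₂Z₂ⁿ(1 − Z₂⁴)), where A₁, A₂ are as in the closed form of φ(P_n^{6,6}, ix) and C₁, C₂ as in the closed form of φ(R_{n−t,t}, ix), equals φ(R_{n+4−t,t}, ix)·φ(P_n^{6,6}, ix) − φ(P_{n+4}^{6,6}, ix)·φ(R_{n−t,t}, ix). -/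
theorem stmt_19 (x : ℝ) (hx : x ≠ 0) (n t : ℕ)
    (hn4 : n % 4 = 0) (ht4 : t % 4 = 2) (hnt : 2 * t ≤ n) (ht10 : 20 ≤ 2 * t) :
    let Z₁ : ℝ := (x + Real.sqrt (x ^ 2 + 4)) / 2
    let Z₂ : ℝ := (x - Real.sqrt (x ^ 2 + 4)) / 2
    let g₁₃ : ℝ := x ^ 13 + 14 * x ^ 11 + 74 * x ^ 9 + 188 * x ^ 7 + 245 * x ^ 5
      + 158 * x ^ 3 + 40 * x
    let g₁₂ : ℝ := x ^ 12 + 13 * x ^ 10 + 62 * x ^ 8 + 138 * x ^ 6 + 153 * x ^ 4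
      + 81 * x ^ 2 + 16
    let A₁ : ℝ := (Z₁ * g₁₃ + g₁₂) * Z₂ ^ 12 / (Z₁ ^ 2 + 1)
    let A₂ : ℝ := (Z₂ * g₁₃ + g₁₂) * Z₁ ^ 12 / (Z₁ ^ 2 + 1)
    let C₁ : ℝ := 1 + (x ^ 2 + 3) / (x ^ 2 + 4) * Z₂ ^ (2 * t) + 2 * Z₂ ^ t
      + Z₁ ^ 2 / (Z₁ ^ 2 + 1) ^ 2
    let C₂ : ℝ := 1 + (x ^ 2 + 3) / (x ^ 2 + 4) * Z₁ ^ (2 * t) + 2 * Z₁ ^ t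
      + Z₂ ^ 2 / (Z₂ ^ 2 + 1) ^ 2
    let Y₁ : ℂ := Complex.I * (Z₁ : ℂ)
    let Y₂ : ℂ := Complex.I * (Z₂ : ℂ)
    let φP : ℕ → ℂ := fun m => (A₁ : ℂ) * Y₁ ^ m + (A₂ : ℂ) * Y₂ ^ m
    let φR : ℕ → ℂ := fun m =>
      (C₁ : ℂ) * Y₁ ^ m + (C₂ : ℂ) * Y₂ ^ m - 2 * (Y₁ ^ t + Y₂ ^ t) + 4
    (((Z₁ ^ 4 - Z₂ ^ 4) * (A₂ * C₁ - A₁ * C₂)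
        + (2 * Z₁ ^ t + 2 * Z₂ ^ t + 4)
          * (A₁ * Z₁ ^ n * (1 - Z₁ ^ 4) + A₂ * Z₂ ^ n * (1 - Z₂ ^ 4)) : ℝ) : ℂ)
      = φR (n + 4) * φP n - φP (n + 4) * φR n := by
  intro Z₁ Z₂ g₁₃ g₁₂ A₁ A₂ C₁ C₂ Y₁ Y₂ φP φR
  obtain ⟨a, rfl⟩ : ∃ a, n = 4 * a := ⟨n / 4, by omega⟩
  obtain ⟨b, rfl⟩ : ∃ b, t = 4 * b + 2 := ⟨t / 4, by omega⟩
  have hs : Real.sqrt (x ^ 2 + 4) ^ 2 = x ^ 2 + 4 := Real.sq_sqrt (by positivity)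
  have hZ : Z₁ * Z₂ = -1 := by
    show (x + Real.sqrt (x ^ 2 + 4)) / 2 * ((x - Real.sqrt (x ^ 2 + 4)) / 2) = -1
    nlinarith [hs]
  have hPQ : Z₁ ^ (4 * a) * Z₂ ^ (4 * a) = 1 := by
    rw [← mul_pow, hZ]
    norm_num [pow_mul]
  have hIn : Complex.I ^ (4 * a) = 1 := by
    rw [pow_mul, Complex.I_pow_four, one_pow]
  have hIn4 : Complex.I ^ (4 * a + 4) = 1 := by
    rw [pow_add, hIn, Complex.I_pow_four, one_mul]
  have hIt : Complex.I ^ (4 * b + 2) = -1 := by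
    rw [pow_add, pow_mul, Complex.I_pow_four, one_pow, one_mul, Complex.I_sq]
  have hPQC : (Z₁ : ℂ) ^ (4 * a) * (Z₂ : ℂ) ^ (4 * a) = 1 := by exact_mod_cast hPQ
  show _ = ((C₁ : ℂ) * Y₁ ^ (4 * a + 4) + (C₂ : ℂ) * Y₂ ^ (4 * a + 4)
      - 2 * (Y₁ ^ (4 * b + 2) + Y₂ ^ (4 * b + 2)) + 4)
      * ((A₁ : ℂ) * Y₁ ^ (4 * a) + (A₂ : ℂ) * Y₂ ^ (4 * a))
    - ((A₁ : ℂ) * Y₁ ^ (4 * a + 4) + (A₂ : ℂ) * Y₂ ^ (4 * a + 4))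
      * ((C₁ : ℂ) * Y₁ ^ (4 * a) + (C₂ : ℂ) * Y₂ ^ (4 * a)
        - 2 * (Y₁ ^ (4 * b + 2) + Y₂ ^ (4 * b + 2)) + 4)
  show _ = ((C₁ : ℂ) * (Complex.I * (Z₁ : ℂ)) ^ (4 * a + 4)
      + (C₂ : ℂ) * (Complex.I * (Z₂ : ℂ)) ^ (4 * a + 4)
      - 2 * ((Complex.I * (Z₁ : ℂ)) ^ (4 * b + 2) + (Complex.I * (Z₂ : ℂ)) ^ (4 * b + 2)) + 4)
      * ((A₁ : ℂ) * (Complex.I * (Z₁ : ℂ)) ^ (4 * a) + (A₂ : ℂ) * (Complex.I * (Z₂ : ℂ)) ^ (4 * a))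
    - ((A₁ : ℂ) * (Complex.I * (Z₁ : ℂ)) ^ (4 * a + 4)
      + (A₂ : ℂ) * (Complex.I * (Z₂ : ℂ)) ^ (4 * a + 4))
      * ((C₁ : ℂ) * (Complex.I * (Z₁ : ℂ)) ^ (4 * a) + (C₂ : ℂ) * (Complex.I * (Z₂ : ℂ)) ^ (4 * a)
        - 2 * ((Complex.I * (Z₁ : ℂ)) ^ (4 * b + 2) + (Complex.I * (Z₂ : ℂ)) ^ (4 * b + 2)) + 4)
  simp only [mul_pow, hIn, hIn4, hIt, one_mul, neg_mul, neg_neg]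
  push_cast
  linear_combination (-((A₂ : ℂ) * C₁ - (A₁ : ℂ) * C₂) * ((Z₁ : ℂ) ^ 4 - (Z₂ : ℂ) ^ 4)) * hPQC
end
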